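/- arXiv:1905.11904 — 2 statements merged into one kernel-verified Lean document; each statement's English description precedes it below -/
import Mathlib

section
/- Under the standing assumptions, let γ ∈ (0, 1/L_f). Then for every x ∈ C and every x̄ ∈ T_γ(x): ((1 − γL_f)/γ)·D_h(x̄, x) ≤ φ_γ(x) − φ(x̄) ≤ ((1 + γL_f)/γ)·D_h(x̄, x). -/
open Filter Topology Set Bornology
open scoped RealInnerProductSpace

noncomputable section

/-- `ℝⁿ` as a Euclidean space. -/
abbrev Rn (n : ℕ) := EuclideanSpace ℝ (Fin n)

variable {n : ℕ}

/-- Effective domain of an extended-real-valued function. -/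
def edom (h : Rn n → EReal) : Set (Rn n) := {x | h x < ⊤}

/-- Properness: finite somewhere, never `⊥`. -/
def ERealProper (h : Rn n → EReal) : Prop := (∃ x, h x < ⊤) ∧ ∀ x, h x ≠ ⊥

/-- Convexity on a set for extended-real-valued functions. -/
def ERealConvexOn (s : Set (Rn n)) (h : Rn n → EReal) : Prop :=
  ∀ ⦃x⦄, x ∈ s → ∀ ⦃y⦄, y ∈ s → ∀ ⦃a b : ℝ⦄, 0 ≤ a → 0 ≤ b → a + b = 1 →
    h (a • x + b • y) ≤ (a : EReal) * h x + (b : EReal) * h y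

/-- Strict convexity on a set for extended-real-valued functions. -/
def ERealStrictConvexOn (s : Set (Rn n)) (h : Rn n → EReal) : Prop :=
  ∀ ⦃x⦄, x ∈ s → ∀ ⦃y⦄, y ∈ s → x ≠ y → ∀ ⦃a b : ℝ⦄, 0 < a → 0 < b → a + b = 1 →
    h (a • x + b • y) < (a : EReal) * h x + (b : EReal) * h y

/-- Strong convexity with modulus `σ` on a set, for extended-real-valued functions. -/
def ERealStrongConvexOn (s : Set (Rn n)) (σ : ℝ) (h : Rn n → EReal) : Prop :=
  ∀ ⦃x⦄, x ∈ s → ∀ ⦃y⦄, y ∈ s → ∀ ⦃a b : ℝ⦄, 0 ≤ a → 0 ≤ b → a + b = 1 →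
    h (a • x + b • y) + ((σ / 2 * (a * b) * ‖x - y‖ ^ 2 : ℝ) : EReal)
      ≤ (a : EReal) * h x + (b : EReal) * h y

/-- A Legendre kernel `h`, together with (a choice of) its gradient mapping `h'` on the
interior of its domain: proper, lsc, convex, 1-coercive, continuously differentiable and
strictly convex on the (nonempty) interior of its domain, and essentially smooth. -/
structure LegendreKernel (h : Rn n → EReal) (h' : Rn n → Rn n) : Prop where
  proper : ERealProper h
  lsc : LowerSemicontinuous h
  convex : ERealConvexOn Set.univ h
  nonemptyInterior : (interior (edom h)).Nonempty
  coercive : ∀ M : ℝ, ∃ R : ℝ, ∀ x : Rn n, R ≤ ‖x‖ → ((M * ‖x‖ : ℝ) : EReal) ≤ h x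
  differentiable : ∀ x ∈ interior (edom h), HasGradientAt (fun y => (h y).toReal) (h' x) x
  gradContinuous : ContinuousOn h' (interior (edom h))
  strictConvexOn : ERealStrictConvexOn (interior (edom h)) h
  essentiallySmooth : ∀ x ∈ frontier (edom h), ∀ u : ℕ → Rn n,
    (∀ k, u k ∈ interior (edom h)) → Tendsto u atTop (𝓝 x) →
    Tendsto (fun k => ‖h' (u k)‖) atTop atTop

open scoped Classical in
/-- Bregman distance `D_h(z, x)`, equal to `⊤` when `x ∉ int dom h`. -/
def Dbreg (h : Rn n → EReal) (h' : Rn n → Rn n) (z x : Rn n) : EReal :=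
  if x ∈ interior (edom h) then h z - h x - ((⟪h' x, z - x⟫ : ℝ) : EReal) else ⊤

/-- Objective function of the Bregman proximal subproblem. -/
def bregObj (h : Rn n → EReal) (h' : Rn n → Rn n) (φ : Rn n → EReal) (γ : ℝ)
    (x z : Rn n) : EReal :=
  φ z + ((1 / γ : ℝ) : EReal) * Dbreg h h' z x

/-- Bregman–Moreau envelope `φ^{h/γ}`. -/
def bregEnv (h : Rn n → EReal) (h' : Rn n → Rn n) (φ : Rn n → EReal) (γ : ℝ)
    (x : Rn n) : EReal :=
  ⨅ z, bregObj h h' φ γ x z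

/-- Bregman proximal mapping `prox_{γ φ}^h` (set of minimizers of the prox subproblem). -/
def bregProx (h : Rn n → EReal) (h' : Rn n → Rn n) (φ : Rn n → EReal) (γ : ℝ)
    (x : Rn n) : Set (Rn n) :=
  {z | ∀ w, bregObj h h' φ γ x z ≤ bregObj h h' φ γ x w}

/-- `γ` lies strictly below the prox-boundedness threshold `γ_φ^h`. -/
def BelowThreshold (h : Rn n → EReal) (h' : Rn n → Rn n) (φ : Rn n → EReal) (γ : ℝ) : Prop :=
  0 < γ ∧ ∃ γ' : ℝ, γ < γ' ∧ ∃ x, bregEnv h h' φ γ' x ≠ ⊥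

/-- `φ` is `h`-prox-bounded: the threshold `γ_φ^h` is positive. -/
def ProxBounded (h : Rn n → EReal) (h' : Rn n → Rn n) (φ : Rn n → EReal) : Prop :=
  ∃ γ : ℝ, 0 < γ ∧ ∃ x, bregEnv h h' φ γ x ≠ ⊥

/-- `f` is `Lf`-smooth relative to the kernel `h`:  `f` is proper, lsc,
`dom f ⊇ dom h`, and `Lf·h ± f` are convex on `int dom h`. -/
def RelSmooth (h f : Rn n → EReal) (Lf : ℝ) : Prop :=
  ERealProper f ∧ LowerSemicontinuous f ∧ edom h ⊆ edom f ∧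
  ERealConvexOn (interior (edom h)) (fun x => (Lf : EReal) * h x + f x) ∧
  ERealConvexOn (interior (edom h)) (fun x => (Lf : EReal) * h x - f x)

/-- Objective function of the Bregman forward-backward subproblem. -/
def fbObj (h : Rn n → EReal) (h' : Rn n → Rn n) (f : Rn n → EReal) (f' : Rn n → Rn n)
    (g : Rn n → EReal) (γ : ℝ) (x z : Rn n) : EReal :=
  f x + ((⟪f' x, z - x⟫ : ℝ) : EReal) + g z + ((1 / γ : ℝ) : EReal) * Dbreg h h' z x

/-- Bregman forward-backward mapping `T_γ`. -/
def fbT (h : Rn n → EReal) (h' : Rn n → Rn n) (f : Rn n → EReal) (f' : Rn n → Rn n)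
    (g : Rn n → EReal) (γ : ℝ) (x : Rn n) : Set (Rn n) :=
  {z | ∀ w, fbObj h h' f f' g γ x z ≤ fbObj h h' f f' g γ x w}

/-- Bregman forward-backward envelope `φ_γ`. -/
def fbEnv (h : Rn n → EReal) (h' : Rn n → Rn n) (f : Rn n → EReal) (f' : Rn n → Rn n)
    (g : Rn n → EReal) (γ : ℝ) (x : Rn n) : EReal :=
  ⨅ z, fbObj h h' f f' g γ x z

end

/-!
Because `x̄` minimizes the forward-backward model at `x`, the envelope `φ_γ(x)` is the model's
value at `x̄`, namely `φ(x̄) + (f(x) + ⟨∇f(x), x̄ - x⟩ - f(x̄)) + D_h(x̄, x)/γ`. The gradient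
inequalities for the convex functions `L_f h ± f` give the two-sided descent inequality
`|f(x̄) - f(x) - ⟨∇f(x), x̄ - x⟩| ≤ L_f D_h(x̄, x)`, which is exactly the sandwich.
-/

theorem ConvexOn.add_apply_sub_le_of_hasFDerivAt {E : Type*} [NormedAddCommGroup E]
    [NormedSpace ℝ E] {s : Set E} {F : E → ℝ} {F' : E →L[ℝ] ℝ} {x y : E}
    (hF : ConvexOn ℝ s F) (hx : x ∈ s) (hy : y ∈ s) (hF' : HasFDerivAt F F' x) :
    F x + F' (y - x) ≤ F y := by
  have hline : HasDerivAt (F ∘ AffineMap.lineMap (k := ℝ) x y) (F' (y - x)) 0 := by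
    rw [← AffineMap.lineMap_apply_zero (k := ℝ) x y] at hF'
    exact hF'.comp_hasDerivAt (0 : ℝ) AffineMap.hasDerivAt_lineMap
  have hslope := (hF.comp_affineMap (AffineMap.lineMap (k := ℝ) x y)).le_slope_of_hasDerivAt
    (by simpa using hx) (by simpa using hy) zero_lt_one hline
  simp only [slope_def_field, Function.comp_apply, AffineMap.lineMap_apply_one,
    AffineMap.lineMap_apply_zero, sub_zero, div_one] at hslope
  linarith

theorem abs_sub_sub_le_of_convexOn_add_sub {E : Type*} [NormedAddCommGroup E]
    [NormedSpace ℝ E] {s : Set E} {F H : E → ℝ} {F' H' : E →L[ℝ] ℝ} {x y : E} {L : ℝ}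
    (hadd : ConvexOn ℝ s (fun z => L * H z + F z)) (hsub : ConvexOn ℝ s (fun z => L * H z - F z))
    (hx : x ∈ s) (hy : y ∈ s) (hH : HasFDerivAt H H' x) (hF : HasFDerivAt F F' x) :
    |F y - F x - F' (y - x)| ≤ L * (H y - H x - H' (y - x)) := by
  have hadd' := hadd.add_apply_sub_le_of_hasFDerivAt hx hy ((hH.const_mul L).add hF)
  have hsub' := hsub.add_apply_sub_le_of_hasFDerivAt hx hy ((hH.const_mul L).sub hF)
  simp only [add_apply, sub_apply, smul_apply, smul_eq_mul] at hadd' hsub'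
  rw [abs_le]
  constructor <;> linarith

theorem EReal.coe_add_add_coe (a b : ℝ) (x : EReal) :
    (a : EReal) + x + b = ((a + b : ℝ) : EReal) + x := by
  rw [add_right_comm, ← EReal.coe_add]

section

variable {n : ℕ}

theorem ERealConvexOn.convexOn_of_eq_coe {s : Set (Rn n)} {φ : Rn n → EReal} {ψ : Rn n → ℝ}
    (hφ : ERealConvexOn s φ) (hs : Convex ℝ s) (heq : ∀ x ∈ s, φ x = ψ x) :
    ConvexOn ℝ s ψ := by
  refine ⟨hs, fun x hx y hy a b ha hb hab => ?_⟩
  have hcomb := hφ hx hy ha hb hab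
  rw [heq _ hx, heq _ hy, heq _ (hs hx hy ha hb hab)] at hcomb
  exact_mod_cast hcomb

theorem ERealConvexOn.convex_edom {φ : Rn n → EReal} (hφ : ERealConvexOn univ φ) :
    Convex ℝ (edom φ) := by
  intro x hx y hy a b ha hb hab
  refine (hφ (mem_univ x) (mem_univ y) ha hb hab).trans_lt (EReal.add_lt_top ?_ ?_) <;>
    simp [EReal.mul_ne_top, ha, hb, (show φ x < ⊤ from hx).ne, (show φ y < ⊤ from hy).ne]

theorem coe_toReal_of_mem_edom {φ : Rn n → EReal} (hφ : ∀ x, φ x ≠ ⊥) {x : Rn n}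
    (hx : x ∈ edom φ) : ((φ x).toReal : EReal) = φ x :=
  EReal.coe_toReal hx.ne (hφ x)

theorem RelSmooth.coe_toReal {h f : Rn n → EReal} {Lf : ℝ} (hRel : RelSmooth h f Lf)
    {x : Rn n} (hx : x ∈ edom h) : ((f x).toReal : EReal) = f x :=
  coe_toReal_of_mem_edom hRel.1.2 (hRel.2.2.1 hx)

theorem Dbreg_eq_coe {h : Rn n → EReal} {h' : Rn n → Rn n} (hbot : ∀ z, h z ≠ ⊥) {x z : Rn n}
    (hx : x ∈ interior (edom h)) (hz : z ∈ edom h) :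
    Dbreg h h' z x = ((h z).toReal - (h x).toReal - ⟪h' x, z - x⟫ : ℝ) := by
  rw [Dbreg, if_pos hx]
  push_cast
  rw [coe_toReal_of_mem_edom hbot hz, coe_toReal_of_mem_edom hbot (interior_subset hx)]

theorem RelSmooth.abs_toReal_sub_sub_inner_le {h f : Rn n → EReal} {h' : Rn n → Rn n} {Lf : ℝ}
    {v x y : Rn n} (hRel : RelSmooth h f Lf) (hLeg : LegendreKernel h h')
    (hx : x ∈ interior (edom h)) (hy : y ∈ interior (edom h))
    (hf' : HasGradientAt (fun z => (f z).toReal) v x) :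
    |(f y).toReal - (f x).toReal - ⟪v, y - x⟫|
      ≤ Lf * ((h y).toReal - (h x).toReal - ⟪h' x, y - x⟫) := by
  have hC : Convex ℝ (interior (edom h)) := hLeg.convex.convex_edom.interior
  have hh : ∀ z ∈ interior (edom h), ((h z).toReal : EReal) = h z := fun z hz =>
    coe_toReal_of_mem_edom hLeg.proper.2 (interior_subset hz)
  have hf : ∀ z ∈ interior (edom h), ((f z).toReal : EReal) = f z := fun z hz =>
    hRel.coe_toReal (interior_subset hz)
  obtain ⟨-, -, -, hconvAdd, hconvSub⟩ := hRel
  have hadd : ConvexOn ℝ (interior (edom h)) (fun z => Lf * (h z).toReal + (f z).toReal) :=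
    hconvAdd.convexOn_of_eq_coe hC fun z hz => by push_cast; rw [hh z hz, hf z hz]
  have hsub : ConvexOn ℝ (interior (edom h)) (fun z => Lf * (h z).toReal - (f z).toReal) :=
    hconvSub.convexOn_of_eq_coe hC fun z hz => by push_cast; rw [hh z hz, hf z hz]
  simpa only [InnerProductSpace.toDual_apply_apply] using
    abs_sub_sub_le_of_convexOn_add_sub hadd hsub hx hy
      (hasGradientAt_iff_hasFDerivAt.mp (hLeg.differentiable x hx))
      (hasGradientAt_iff_hasFDerivAt.mp hf')

theorem fbEnv_eq_fbObj_of_mem_fbT {h : Rn n → EReal} {h' : Rn n → Rn n} {f : Rn n → EReal}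
    {f' : Rn n → Rn n} {g : Rn n → EReal} {γ : ℝ} {x z : Rn n}
    (hz : z ∈ fbT h h' f f' g γ x) : fbEnv h h' f f' g γ x = fbObj h h' f f' g γ x z :=
  le_antisymm (iInf_le _ z) (le_iInf hz)

end

theorem stmt12_fbe_sandwich_general
    {n : ℕ} (h : Rn n → EReal) (h' : Rn n → Rn n) (f : Rn n → EReal) (f' : Rn n → Rn n)
    (g : Rn n → EReal) (Lf γ : ℝ)
    (hLeg : LegendreKernel h h') (hRel : RelSmooth h f Lf)
    (hf' : ∀ x ∈ interior (edom h), HasGradientAt (fun y => (f y).toReal) (f' x) x)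
    (hγ : 0 < γ)
    (hrange : ∀ x ∈ interior (edom h), fbT h h' f f' g γ x ⊆ interior (edom h)) :
    ∀ x ∈ interior (edom h), ∀ xb ∈ fbT h h' f f' g γ x,
      (f xb + g xb) + (((1 - γ * Lf) / γ : ℝ) : EReal) * Dbreg h h' xb x
        ≤ fbEnv h h' f f' g γ x
      ∧ fbEnv h h' f f' g γ x
        ≤ (f xb + g xb) + (((1 + γ * Lf) / γ : ℝ) : EReal) * Dbreg h h' xb x := by
  intro x hx xb hxb
  have hxbC := hrange x hx hxb
  have hdescent := abs_le.mp (hRel.abs_toReal_sub_sub_inner_le hLeg hx hxbC (hf' x hx))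
  have hsub : (1 - γ * Lf) / γ = 1 / γ - Lf := by field_simp
  have hadd : (1 + γ * Lf) / γ = 1 / γ + Lf := by field_simp
  rw [fbEnv_eq_fbObj_of_mem_fbT hxb, fbObj, Dbreg_eq_coe hLeg.proper.2 hx (interior_subset hxbC),
    ← hRel.coe_toReal (interior_subset hx), ← hRel.coe_toReal (interior_subset hxbC), hsub, hadd]
  -- every term except `g xb` is now a real number, so the comparison reduces to one in `ℝ`
  simp only [← EReal.coe_mul, ← EReal.coe_add (f x).toReal, EReal.coe_add_add_coe]
  constructor <;> gcongr ?_ + _ <;> norm_cast <;> linarith [hdescent.1, hdescent.2]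

theorem stmt12_fbe_sandwich
    {n : ℕ} (h : Rn n → EReal) (h' : Rn n → Rn n) (f : Rn n → EReal) (f' : Rn n → Rn n)
    (g : Rn n → EReal) (Lf γ : ℝ)
    (hLeg : LegendreKernel h h') (hLf : 0 ≤ Lf) (hRel : RelSmooth h f Lf)
    (hf' : ∀ x ∈ interior (edom h), HasGradientAt (fun y => (f y).toReal) (f' x) x)
    (hg : ERealProper g) (hglsc : LowerSemicontinuous g)
    (hmin : ∃ xm ∈ closure (interior (edom h)),
      ∀ y ∈ closure (interior (edom h)), f xm + g xm ≤ f y + g y)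
    (hγ : 0 < γ) (hγL : γ * Lf < 1)
    (hrange : ∀ x ∈ interior (edom h), fbT h h' f f' g γ x ⊆ interior (edom h)) :
    ∀ x ∈ interior (edom h), ∀ xb ∈ fbT h h' f f' g γ x,
      (f xb + g xb) + (((1 - γ * Lf) / γ : ℝ) : EReal) * Dbreg h h' xb x
        ≤ fbEnv h h' f f' g γ x
      ∧ fbEnv h h' f f' g γ x
        ≤ (f xb + g xb) + (((1 + γ * Lf) / γ : ℝ) : EReal) * Dbreg h h' xb x :=
  stmt12_fbe_sandwich_general h h' f f' g Lf γ hLeg hRel hf' hγ hrange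
end

section
/- Under the standing assumptions, if x⋆ ∈ C is a local minimum of φ, then there exists γ₀ ∈ (0, 1/L_f] such that for every γ ∈ (0, γ₀), x⋆ is a nondegenerate fixed point of the Bregman forward-backward mapping, i.e., T_γ(x⋆) = {x⋆}. -/
open Filter Topology Set Bornology
open scoped RealInnerProductSpace

/-!
Relative smoothness gives the descent inequality
`f w ≤ f x⋆ + ⟪∇f x⋆, w - x⋆⟫ + L_f D_h(w, x⋆)` on all of `dom h` (at boundary points by lower
semicontinuity of `f`), so the forward-backward objective at `x⋆` is at least
`φ w + (1/γ - L_f) D_h(w, x⋆)`, while it equals `φ x⋆` at `w = x⋆`. Near `x⋆`, `φ w ≥ φ x⋆` and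
`D_h(w, x⋆) > 0` by strict convexity of `h`. Far from `x⋆`, `D_h(·, x⋆)` is at least some `δ > 0`:
its minimum over a small sphere around `x⋆`, propagated outwards by convexity along rays. Since
also `φ w ≥ min φ`, the objective exceeds `φ x⋆` at every `w ≠ x⋆` as soon as
`(1/γ - L_f) δ > φ x⋆ - min φ`.
-/

section ConvexAnalysis

variable {E : Type*} [NormedAddCommGroup E] [NormedSpace ℝ E] {s : Set E} {ψ : E → ℝ}
  {φ' : E →L[ℝ] ℝ} {x w : E}

theorem ConvexOn.map_add_smul_sub_le (hψ : ConvexOn ℝ s ψ) (hx : x ∈ s) (hw : w ∈ s) {t : ℝ}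
    (ht₀ : 0 ≤ t) (ht₁ : t ≤ 1) : ψ (x + t • (w - x)) ≤ ψ x + t * (ψ w - ψ x) := by
  have h := hψ.2 hx hw (sub_nonneg.2 ht₁) ht₀ (sub_add_cancel 1 t)
  rw [show (1 - t) • x + t • w = x + t • (w - x) by module, smul_eq_mul, smul_eq_mul] at h
  linarith

theorem ConvexOn.add_le_of_hasFDerivAt (hψ : ConvexOn ℝ s ψ) (hx : x ∈ s) (hw : w ∈ s)
    (hψ' : HasFDerivAt ψ φ' x) : ψ x + φ' (w - x) ≤ ψ w := by
  set ℓ : ℝ →ᵃ[ℝ] E := AffineMap.lineMap x w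
  have hline : ConvexOn ℝ (ℓ ⁻¹' s) (ψ ∘ ℓ) := hψ.comp_affineMap ℓ
  have hderiv : HasDerivAt (ψ ∘ ℓ) (φ' (w - x)) 0 := by
    rw [← AffineMap.lineMap_apply_zero x w (k := ℝ)] at hψ'
    exact hψ'.comp_hasDerivAt 0 AffineMap.hasDerivAt_lineMap
  have := hline.le_slope_of_hasDerivAt (by simpa [ℓ] using hx) (by simpa [ℓ] using hw)
    zero_lt_one hderiv
  simp only [slope_def_field, Function.comp_apply, ℓ, AffineMap.lineMap_apply_one,
    AffineMap.lineMap_apply_zero, sub_zero, div_one] at this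
  linarith

theorem StrictConvexOn.add_lt_of_hasFDerivAt (hψ : StrictConvexOn ℝ s ψ) (hx : x ∈ s)
    (hw : w ∈ s) (hne : w ≠ x) (hψ' : HasFDerivAt ψ φ' x) : ψ x + φ' (w - x) < ψ w := by
  set m : E := x + (1 / 2 : ℝ) • (w - x)
  have hm : m ∈ s := by
    simpa [m] using hψ.1.add_smul_sub_mem hx hw (t := 1 / 2) ⟨by norm_num, by norm_num⟩
  have hmid : ψ m < ψ x + 1 / 2 * (ψ w - ψ x) := by
    have h := hψ.2 hx hw hne.symm (by norm_num : (0 : ℝ) < 1 / 2) (by norm_num : (0 : ℝ) < 1 / 2)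
      (by norm_num)
    rw [show (1 / 2 : ℝ) • x + (1 / 2 : ℝ) • w = m by module, smul_eq_mul, smul_eq_mul] at h
    linarith
  have hgrad := hψ.convexOn.add_le_of_hasFDerivAt hx hm hψ'
  rw [show m - x = (1 / 2 : ℝ) • (w - x) by simp [m], map_smul, smul_eq_mul] at hgrad
  linarith

theorem ConvexOn.exists_pos_le_sub_sub_of_le_norm_sub [FiniteDimensional ℝ E]
    (hψ : ConvexOn ℝ s ψ) (hstrict : StrictConvexOn ℝ (interior s) ψ) (hψ' : HasFDerivAt ψ φ' x)
    {ρ : ℝ} (hρ : 0 < ρ) (hball : Metric.closedBall x ρ ⊆ interior s) :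
    ∃ δ > 0, ∀ w ∈ s, ρ ≤ ‖w - x‖ → δ ≤ ψ w - ψ x - φ' (w - x) := by
  have hx : x ∈ interior s := hball (Metric.mem_closedBall_self hρ.le)
  have hsphere : Metric.sphere x ρ ⊆ interior s := Metric.sphere_subset_closedBall.trans hball
  obtain ⟨δ, hδ, hδle⟩ := (isCompact_sphere x ρ).exists_forall_le' (a := 0)
    (f := fun u => ψ u - ψ x - φ' (u - x))
    (((hψ.continuousOn_interior.mono hsphere).sub continuousOn_const).sub
      (φ'.continuous.comp (continuous_id.sub continuous_const)).continuousOn)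
    fun u hu => by
      have hne : u ≠ x := Metric.ne_of_mem_sphere hu hρ.ne'
      linarith [hstrict.add_lt_of_hasFDerivAt hx (hsphere hu) hne hψ']
  refine ⟨δ, hδ, fun w hw hfar => ?_⟩
  have hnorm : 0 < ‖w - x‖ := hρ.trans_le hfar
  set t := ρ / ‖w - x‖
  have ht₀ : 0 ≤ t := by positivity
  have ht₁ : t ≤ 1 := div_le_one_of_le₀ hfar hnorm.le
  have hu : x + t • (w - x) ∈ Metric.sphere x ρ := by
    rw [mem_sphere_iff_norm, add_sub_cancel_left, norm_smul, Real.norm_of_nonneg ht₀,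
      div_mul_cancel₀ _ hnorm.ne']
  have hray := hψ.map_add_smul_sub_le (interior_subset hx) hw ht₀ ht₁
  have hgap := hδle _ hu
  have hnonneg := hψ.add_le_of_hasFDerivAt (interior_subset hx) hw hψ'
  simp only [add_sub_cancel_left, map_smul, smul_eq_mul] at hgap
  nlinarith

end ConvexAnalysis

theorem LowerSemicontinuousAt.le_of_tendsto {α β ι : Type*} [TopologicalSpace α]
    [TopologicalSpace β] [LinearOrder β] [DenselyOrdered β] [OrderTopology β] {F : α → β} {x : α}
    (hF : LowerSemicontinuousAt F x) {l : Filter ι} [l.NeBot] {u : ι → α} {b : ι → β} {B : β}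
    (hu : Tendsto u l (𝓝 x)) (hb : Tendsto b l (𝓝 B)) (hle : ∀ᶠ i in l, F (u i) ≤ b i) :
    F x ≤ B := by
  by_contra! hBF
  obtain ⟨y, hBy, hyF⟩ := exists_between hBF
  obtain ⟨i, hFu, hub, hby⟩ :=
    ((hu.eventually (hF y hyF)).and (hle.and (hb.eventually (eventually_lt_nhds hBy)))).exists
  exact (hFu.trans_le hub).not_gt hby

theorem exists_pos_forall_lt_one_div_sub_mul {L δ : ℝ} (hL : 0 ≤ L) (hδ : 0 < δ) (a : ℝ) :
    ∃ γ₀ > 0, γ₀ * L ≤ 1 ∧ ∀ γ, 0 < γ → γ < γ₀ → 0 < 1 / γ - L ∧ a < (1 / γ - L) * δ := by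
  have hpos : 0 < L + |a| / δ + 1 := by positivity
  refine ⟨1 / (L + |a| / δ + 1), by positivity, ?_, fun γ hγ hγγ₀ => ?_⟩
  · rw [one_div_mul_eq_div, div_le_one hpos]
    linarith [div_nonneg (abs_nonneg a) hδ.le]
  · have hinv : L + |a| / δ + 1 < 1 / γ := by
      simpa using (one_div_lt_one_div_of_lt hγ hγγ₀)
    have hc : |a| / δ + 1 < 1 / γ - L := by linarith
    refine ⟨by linarith [div_nonneg (abs_nonneg a) hδ.le], ?_⟩
    calc a ≤ |a| / δ * δ := by rw [div_mul_cancel₀ _ hδ.ne']; exact le_abs_self a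
      _ < (1 / γ - L) * δ := by gcongr; linarith

section Bregman

variable {n : ℕ} {s : Set (Rn n)} {F h f g : Rn n → EReal} {h' f' : Rn n → Rn n} {Lf γ : ℝ}
  {x w : Rn n}

theorem ERealProper.coe_toReal (hF : ERealProper F) (hx : x ∈ edom F) :
    ((F x).toReal : EReal) = F x :=
  EReal.coe_toReal hx.ne (hF.2 x)

theorem ERealConvexOn.convexOn_toReal (hF : ERealConvexOn s F) (hs : Convex ℝ s)
    (hfin : ∀ x ∈ s, ((F x).toReal : EReal) = F x) : ConvexOn ℝ s fun x => (F x).toReal := by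
  refine ⟨hs, fun x hx y hy a b ha hb hab => ?_⟩
  have h := hF hx hy ha hb hab
  rw [← hfin x hx, ← hfin y hy, ← hfin _ (hs hx hy ha hb hab)] at h
  exact_mod_cast h

theorem ERealStrictConvexOn.strictConvexOn_toReal (hF : ERealStrictConvexOn s F)
    (hs : Convex ℝ s) (hfin : ∀ x ∈ s, ((F x).toReal : EReal) = F x) :
    StrictConvexOn ℝ s fun x => (F x).toReal := by
  refine ⟨hs, fun x hx y hy hxy a b ha hb hab => ?_⟩
  have h := hF hx hy hxy ha hb hab
  rw [← hfin x hx, ← hfin y hy, ← hfin _ (hs hx hy ha.le hb.le hab)] at h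
  exact_mod_cast h

theorem ERealConvexOn.convex_edom_s14 (hF : ERealConvexOn univ F) (hbot : ∀ x, F x ≠ ⊥) :
    Convex ℝ (edom F) := by
  intro x hx y hy a b ha hb hab
  refine (hF (mem_univ x) (mem_univ y) ha hb hab).trans_lt ?_
  rw [← EReal.coe_toReal hx.ne (hbot x), ← EReal.coe_toReal hy.ne (hbot y)]
  exact_mod_cast EReal.coe_lt_top _

namespace LegendreKernel

theorem convex_edom_s14 (hLeg : LegendreKernel h h') : Convex ℝ (edom h) :=
  hLeg.convex.convex_edom_s14 hLeg.proper.2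

theorem convexOn_toReal (hLeg : LegendreKernel h h') :
    ConvexOn ℝ (edom h) fun x => (h x).toReal :=
  ERealConvexOn.convexOn_toReal (fun x _ y _ => hLeg.convex (mem_univ x) (mem_univ y))
    hLeg.convex_edom_s14 fun _ hx => hLeg.proper.coe_toReal hx

theorem mem_closure_interior (hLeg : LegendreKernel h h') (hw : w ∈ edom h) :
    w ∈ closure (interior (edom h)) := by
  rw [hLeg.convex_edom_s14.closure_interior_eq_closure_of_nonempty_interior hLeg.nonemptyInterior]
  exact subset_closure hw

theorem strictConvexOn_toReal (hLeg : LegendreKernel h h') :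
    StrictConvexOn ℝ (interior (edom h)) fun x => (h x).toReal :=
  hLeg.strictConvexOn.strictConvexOn_toReal hLeg.convex_edom_s14.interior
    fun _ hx => hLeg.proper.coe_toReal (interior_subset hx)

end LegendreKernel

/-- `toReal` sends `⊤` to `0`: this agrees with `Dbreg h h' z x` only for `z ∈ edom h` and
`x ∈ interior (edom h)` (`dbreg_eq_coe`). -/
noncomputable def dbregReal (h : Rn n → EReal) (h' : Rn n → Rn n) (z x : Rn n) : ℝ :=
  (h z).toReal - (h x).toReal - ⟪h' x, z - x⟫

theorem dbreg_eq_coe (hh : ERealProper h) (hx : x ∈ interior (edom h)) (hw : w ∈ edom h) :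
    Dbreg h h' w x = dbregReal h h' w x := by
  rw [Dbreg, if_pos hx, ← hh.coe_toReal hw, ← hh.coe_toReal (interior_subset hx), dbregReal]
  norm_cast

theorem dbreg_eq_top (hh : ERealProper h) (hx : x ∈ interior (edom h)) (hw : w ∉ edom h) :
    Dbreg h h' w x = ⊤ := by
  rw [Dbreg, if_pos hx, (not_lt_top_iff.1 hw : h w = ⊤), ← hh.coe_toReal (interior_subset hx),
    EReal.top_sub_coe, EReal.top_sub_coe]

namespace LegendreKernel

theorem dbregReal_pos (hLeg : LegendreKernel h h') (hx : x ∈ interior (edom h))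
    (hw : w ∈ interior (edom h)) (hne : w ≠ x) : 0 < dbregReal h h' w x := by
  have := hLeg.strictConvexOn_toReal.add_lt_of_hasFDerivAt hx hw hne
    (hLeg.differentiable x hx).hasFDerivAt
  simp only [InnerProductSpace.toDual_apply_apply] at this
  rw [dbregReal]
  linarith

theorem exists_pos_le_dbregReal (hLeg : LegendreKernel h h') {ρ : ℝ} (hρ : 0 < ρ)
    (hball : Metric.closedBall x ρ ⊆ interior (edom h)) :
    ∃ δ > 0, ∀ w ∈ edom h, ρ ≤ ‖w - x‖ → δ ≤ dbregReal h h' w x :=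
  hLeg.convexOn_toReal.exists_pos_le_sub_sub_of_le_norm_sub hLeg.strictConvexOn_toReal
    (hLeg.differentiable x (hball (Metric.mem_closedBall_self hρ.le))).hasFDerivAt hρ hball

theorem exists_forall_lt_add_mul_dbregReal (hLeg : LegendreKernel h h') {φ : Rn n → EReal}
    {p q ρ : ℝ} (hρ : 0 < ρ) (hball : Metric.closedBall x ρ ⊆ interior (edom h))
    (hloc : ∀ w ∈ Metric.closedBall x ρ, (p : EReal) ≤ φ w)
    (hlow : ∀ w ∈ edom h, (q : EReal) ≤ φ w) :
    ∃ δ > 0, ∀ c > 0, p - q < c * δ → ∀ w ∈ edom h, w ≠ x →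
      (p : EReal) < φ w + ((c * dbregReal h h' w x : ℝ) : EReal) := by
  have hx : x ∈ interior (edom h) := hball (Metric.mem_closedBall_self hρ.le)
  obtain ⟨δ, hδ, hgap⟩ := hLeg.exists_pos_le_dbregReal hρ hball
  refine ⟨δ, hδ, fun c hc hcδ w hw hne => ?_⟩
  rcases lt_or_ge ‖w - x‖ ρ with hnear | hfar
  · have hwρ : w ∈ Metric.closedBall x ρ := mem_closedBall_iff_norm.2 hnear.le
    calc (p : EReal) < (p + c * dbregReal h h' w x : ℝ) := by
          exact_mod_cast lt_add_of_pos_right p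
            (mul_pos hc (hLeg.dbregReal_pos hx (hball hwρ) hne))
      _ ≤ φ w + ((c * dbregReal h h' w x : ℝ) : EReal) := by
          rw [EReal.coe_add]
          exact add_le_add_left (hloc w hwρ) _
  · calc (p : EReal) < (q + c * δ : ℝ) := by exact_mod_cast (by linarith)
      _ ≤ φ w + ((c * dbregReal h h' w x : ℝ) : EReal) := by
          rw [EReal.coe_add]
          exact add_le_add (hlow w hw)
            (EReal.coe_le_coe_iff.2 (mul_le_mul_of_nonneg_left (hgap w hw hfar) hc.le))

theorem dbregReal_add_smul_sub_le (hLeg : LegendreKernel h h') (hx : x ∈ edom h)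
    (hw : w ∈ edom h) {t : ℝ} (ht₀ : 0 ≤ t) (ht₁ : t ≤ 1) :
    dbregReal h h' (x + t • (w - x)) x ≤ t * dbregReal h h' w x := by
  have := hLeg.convexOn_toReal.map_add_smul_sub_le hx hw ht₀ ht₁
  simp only [dbregReal, add_sub_cancel_left, real_inner_smul_right]
  linarith

end LegendreKernel

namespace RelSmooth

theorem toReal_le_of_mem_interior (hRel : RelSmooth h f Lf) (hLeg : LegendreKernel h h')
    (hx : x ∈ interior (edom h)) (hf' : HasGradientAt (fun y => (f y).toReal) (f' x) x)
    (hw : w ∈ interior (edom h)) :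
    (f w).toReal ≤ (f x).toReal + ⟪f' x, w - x⟫ + Lf * dbregReal h h' w x := by
  have hfin : ∀ y ∈ interior (edom h),
      ((Lf * (h y).toReal - (f y).toReal : ℝ) : EReal) = Lf * h y - f y := fun y hy => by
    rw [← hLeg.proper.coe_toReal (interior_subset hy),
      ← hRel.1.coe_toReal (hRel.2.2.1 (interior_subset hy))]
    norm_cast
  have hconv : ConvexOn ℝ (interior (edom h)) fun y => Lf * (h y).toReal - (f y).toReal :=
    (hRel.2.2.2.2.convexOn_toReal hLeg.convex_edom_s14.interior fun y hy => by
      rw [← hfin y hy, EReal.toReal_coe]).congr fun y hy => by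
        simp only [← hfin y hy, EReal.toReal_coe]
  have := hconv.add_le_of_hasFDerivAt hx hw
    (((hLeg.differentiable x hx).hasFDerivAt.const_mul Lf).sub hf'.hasFDerivAt)
  simp only [sub_apply, smul_apply, InnerProductSpace.toDual_apply_apply, smul_eq_mul] at this
  rw [dbregReal]
  linarith

theorem toReal_le (hRel : RelSmooth h f Lf) (hLeg : LegendreKernel h h') (hLf : 0 ≤ Lf)
    (hx : x ∈ interior (edom h)) (hf' : HasGradientAt (fun y => (f y).toReal) (f' x) x)
    (hw : w ∈ edom h) :
    (f w).toReal ≤ (f x).toReal + ⟪f' x, w - x⟫ + Lf * dbregReal h h' w x := by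
  set u : ℝ → Rn n := fun t => x + t • (w - x)
  have hu : Tendsto u (𝓝[<] 1) (𝓝 w) := by
    simpa [u] using ((by fun_prop : Continuous u).tendsto 1).mono_left nhdsWithin_le_nhds
  set b : ℝ → ℝ := fun t => (f x).toReal + t * ⟪f' x, w - x⟫ + Lf * (t * dbregReal h h' w x)
  have hb : Tendsto (fun t => (b t : EReal)) (𝓝[<] 1) (𝓝 (b 1)) :=
    EReal.tendsto_coe.2 (((by fun_prop : Continuous b).tendsto 1).mono_left nhdsWithin_le_nhds)
  have hle : ∀ᶠ t in 𝓝[<] 1, f (u t) ≤ b t := by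
    filter_upwards [Ioo_mem_nhdsLT zero_lt_one] with t ht
    have hut : u t ∈ interior (edom h) := by
      convert hLeg.convex_edom_s14.combo_interior_self_mem_interior hx hw (sub_pos.2 ht.2) ht.1.le
        (sub_add_cancel 1 t) using 1
      simp only [u]
      module
    rw [← hRel.1.coe_toReal (hRel.2.2.1 (interior_subset hut)), EReal.coe_le_coe_iff]
    have hdesc := hRel.toReal_le_of_mem_interior hLeg hx hf' hut
    have hray := hLeg.dbregReal_add_smul_sub_le (interior_subset hx) hw ht.1.le ht.2.le
    simp only [u, add_sub_cancel_left, real_inner_smul_right] at hdesc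
    linarith [mul_le_mul_of_nonneg_left hray hLf]
  have := LowerSemicontinuousAt.le_of_tendsto (hRel.2.1 w) hu hb hle
  rw [← hRel.1.coe_toReal (hRel.2.2.1 hw), EReal.coe_le_coe_iff] at this
  simpa [b] using this

end RelSmooth

theorem fbObj_self (hh : ERealProper h) (hx : x ∈ interior (edom h)) :
    fbObj h h' f f' g γ x x = f x + g x := by
  simp [fbObj, dbreg_eq_coe hh hx (interior_subset hx), dbregReal]

theorem fbObj_eq_top (hh : ERealProper h) (hx : x ∈ interior (edom h)) (hγ : 0 < γ)
    (hfx : f x ≠ ⊥) (hgw : g w ≠ ⊥) (hw : w ∉ edom h) : fbObj h h' f f' g γ x w = ⊤ := by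
  rw [fbObj, dbreg_eq_top hh hx hw, EReal.mul_top_of_pos (by exact_mod_cast one_div_pos.2 hγ)]
  exact EReal.add_top_of_ne_bot (by simp [EReal.add_eq_bot_iff, hfx, hgw])

theorem le_fbObj (hLeg : LegendreKernel h h') (hLf : 0 ≤ Lf) (hRel : RelSmooth h f Lf)
    (hx : x ∈ interior (edom h)) (hf' : HasGradientAt (fun y => (f y).toReal) (f' x) x)
    (hw : w ∈ edom h) :
    f w + g w + (((1 / γ - Lf) * dbregReal h h' w x : ℝ) : EReal) ≤ fbObj h h' f f' g γ x w := by
  have hdesc := hRel.toReal_le hLeg hLf hx hf' hw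
  have key : (((f w).toReal + (1 / γ - Lf) * dbregReal h h' w x : ℝ) : EReal)
      ≤ (((f x).toReal + ⟪f' x, w - x⟫ + 1 / γ * dbregReal h h' w x : ℝ) : EReal) := by
    exact_mod_cast (by linarith)
  rw [fbObj, dbreg_eq_coe hLeg.proper hx hw, ← hRel.1.coe_toReal (hRel.2.2.1 hw),
    ← hRel.1.coe_toReal (hRel.2.2.1 (interior_subset hx))]
  push_cast at key
  calc _ = (f w).toReal + (((1 / γ - Lf) * dbregReal h h' w x : ℝ) : EReal) + g w := by
        push_cast; abel
    _ ≤ (f x).toReal + ⟪f' x, w - x⟫ + (1 / γ : ℝ) * (dbregReal h h' w x : EReal) + g w := by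
        push_cast; gcongr
    _ = _ := by abel

theorem fbT_eq_singleton_of_forall_lt (hLeg : LegendreKernel h h') (hLf : 0 ≤ Lf)
    (hRel : RelSmooth h f Lf) (hg : ERealProper g) (hx : x ∈ interior (edom h))
    (hf' : HasGradientAt (fun y => (f y).toReal) (f' x) x) (hγ : 0 < γ)
    (hφx : f x + g x ≠ ⊤)
    (hlt : ∀ w ∈ edom h, w ≠ x →
      f x + g x < f w + g w + (((1 / γ - Lf) * dbregReal h h' w x : ℝ) : EReal)) :
    fbT h h' f f' g γ x = {x} := by
  have hmin : ∀ w ≠ x, fbObj h h' f f' g γ x x < fbObj h h' f f' g γ x w := by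
    intro w hne
    rw [fbObj_self hLeg.proper hx]
    by_cases hw : w ∈ edom h
    · exact (hlt w hw hne).trans_le (le_fbObj hLeg hLf hRel hx hf' hw)
    · rw [fbObj_eq_top hLeg.proper hx hγ (hRel.1.2 x) (hg.2 w) hw]
      exact hφx.lt_top
  refine eq_singleton_iff_unique_mem.2 ⟨fun w => ?_, fun z hz => ?_⟩
  · rcases eq_or_ne w x with rfl | hne
    exacts [le_rfl, (hmin w hne).le]
  · by_contra hne
    exact (hz x).not_gt (hmin z hne)

end Bregman

theorem stmt14_localmin_nondegenerate_fb_fixed_point_general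
    {n : ℕ} (h : Rn n → EReal) (h' : Rn n → Rn n) (f : Rn n → EReal) (f' : Rn n → Rn n)
    (g : Rn n → EReal) (Lf : ℝ)
    (hLeg : LegendreKernel h h') (hLf : 0 ≤ Lf) (hRel : RelSmooth h f Lf)
    (hf' : ∀ x ∈ interior (edom h), HasGradientAt (fun y => (f y).toReal) (f' x) x)
    (hg : ERealProper g)
    (hmin : ∃ xm ∈ closure (interior (edom h)),
      ∀ y ∈ closure (interior (edom h)), f xm + g xm ≤ f y + g y)
    (xs : Rn n) (hxs : xs ∈ interior (edom h)) (hxdom : f xs + g xs ≠ ⊤)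
    (hlocmin : ∀ᶠ y in 𝓝 xs, f xs + g xs ≤ f y + g y) :
    ∃ γ₀ : ℝ, 0 < γ₀ ∧ γ₀ * Lf ≤ 1 ∧
      ∀ γ : ℝ, 0 < γ → γ < γ₀ → fbT h h' f f' g γ xs = {xs} := by
  have hbot : ∀ y, f y + g y ≠ ⊥ := fun y => EReal.add_ne_bot_iff.2 ⟨hRel.1.2 y, hg.2 y⟩
  obtain ⟨xm, -, hxm_min⟩ := hmin
  obtain ⟨p, hp⟩ : ∃ p : ℝ, f xs + g xs = p := ⟨_, (EReal.coe_toReal hxdom (hbot xs)).symm⟩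
  obtain ⟨q, hq⟩ : ∃ q : ℝ, f xm + g xm = q := ⟨_, (EReal.coe_toReal
    (ne_top_of_le_ne_top hxdom (hxm_min xs (subset_closure hxs))) (hbot xm)).symm⟩
  obtain ⟨ε, hε, hball⟩ := Metric.nhds_basis_closedBall.eventually_iff.1
    (hlocmin.and (isOpen_interior.mem_nhds hxs))
  obtain ⟨δ, hδ, hlt⟩ := hLeg.exists_forall_lt_add_mul_dbregReal (φ := fun w => f w + g w) hε
    (fun w hw => (hball hw).2) (fun w hw => hp ▸ (hball hw).1)
    fun w hw => hq ▸ hxm_min w (hLeg.mem_closure_interior hw)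
  obtain ⟨γ₀, hγ₀, hγ₀Lf, hstep⟩ := exists_pos_forall_lt_one_div_sub_mul hLf hδ (p - q)
  refine ⟨γ₀, hγ₀, hγ₀Lf, fun γ hγ hγγ₀ => ?_⟩
  obtain ⟨hc, hcδ⟩ := hstep γ hγ hγγ₀
  exact fbT_eq_singleton_of_forall_lt hLeg hLf hRel hg hxs (hf' xs hxs) hγ hxdom
    fun w hw hne => hp ▸ hlt _ hc hcδ w hw hne

theorem stmt14_localmin_nondegenerate_fb_fixed_point
    {n : ℕ} (h : Rn n → EReal) (h' : Rn n → Rn n) (f : Rn n → EReal) (f' : Rn n → Rn n)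
    (g : Rn n → EReal) (Lf : ℝ)
    (hLeg : LegendreKernel h h') (hLf : 0 ≤ Lf) (hRel : RelSmooth h f Lf)
    (hf' : ∀ x ∈ interior (edom h), HasGradientAt (fun y => (f y).toReal) (f' x) x)
    (hg : ERealProper g) (hglsc : LowerSemicontinuous g)
    (hmin : ∃ xm ∈ closure (interior (edom h)),
      ∀ y ∈ closure (interior (edom h)), f xm + g xm ≤ f y + g y)
    (hrange : ∀ γ : ℝ, 0 < γ → γ * Lf < 1 →
      ∀ x ∈ interior (edom h), fbT h h' f f' g γ x ⊆ interior (edom h))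
    (xs : Rn n) (hxs : xs ∈ interior (edom h)) (hxdom : f xs + g xs ≠ ⊤)
    (hlocmin : ∀ᶠ y in 𝓝 xs, f xs + g xs ≤ f y + g y) :
    ∃ γ₀ : ℝ, 0 < γ₀ ∧ γ₀ * Lf ≤ 1 ∧
      ∀ γ : ℝ, 0 < γ → γ < γ₀ → fbT h h' f f' g γ xs = {xs} :=
  stmt14_localmin_nondegenerate_fb_fixed_point_general h h' f f' g Lf hLeg hLf hRel hf' hg hmin xs
    hxs hxdom hlocmin
end
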